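/- Let n ≥ 1 and let σ be a real number with σ ≥ (n−2)·π/2. Then the superlevel set { λ ∈ ℝⁿ : Θ(λ) > σ } is a convex subset of ℝⁿ. -/
import Mathlib

open Real

noncomputable section StmtAux

/-- `Θ(λ) = ∑ arctan λᵢ`. -/
def Th (n : ℕ) (l : Fin n → ℝ) : ℝ := ∑ i, Real.arctan (l i)

/-- `h(λ) = tan(Θ(λ) - (n-1)π/2)`, a reparametrization of `Θ` on the bottom region. -/
def hh (n : ℕ) (l : Fin n → ℝ) : ℝ := Real.tan (Th n l - ((n : ℝ) - 1) * (π / 2))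

lemma Th_lt {n : ℕ} (hn : 1 ≤ n) (l : Fin n → ℝ) : Th n l < (n : ℝ) * (π / 2) := by
  have h : Th n l < ∑ _i : Fin n, π / 2 := by
    refine Finset.sum_lt_sum_of_nonempty ?_ fun i _ => Real.arctan_lt_pi_div_two _
    exact Finset.univ_nonempty_iff.mpr (Fin.pos_iff_nonempty.mp hn)
  simpa [Finset.sum_const, Finset.card_univ, nsmul_eq_mul] using h

lemma Th_succ (n : ℕ) (l : Fin (n+1) → ℝ) :
    Th (n+1) l = Th n (Fin.init l) + Real.arctan (l (Fin.last n)) := by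
  simp [Th, Fin.sum_univ_castSucc, Fin.init]

lemma combo_pos {a b p q : ℝ} (ha : 0 ≤ a) (hb : 0 ≤ b) (hab : a + b = 1)
    (hp : 0 < p) (hq : 0 < q) : 0 < a * p + b * q := by
  rcases ha.lt_or_eq with h | h
  · have h1 : 0 < a * p := mul_pos h hp
    have h2 : 0 ≤ b * q := mul_nonneg hb hq.le
    linarith
  · have hb1 : b = 1 := by linarith
    simp [← h, hb1, hq]

/-- quadratic-over-linear convexity -/
lemma qol {a b s₁ s₂ q₁ q₂ : ℝ} (ha : 0 ≤ a) (hb : 0 ≤ b) (hab : a + b = 1)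
    (h1 : 0 < q₁) (h2 : 0 < q₂) :
    (1 + (a*s₁ + b*s₂)^2) / (a*q₁ + b*q₂) ≤ a*((1+s₁^2)/q₁) + b*((1+s₂^2)/q₂) := by
  have hq : 0 < a*q₁ + b*q₂ := combo_pos ha hb hab h1 h2
  have hr : a*((1+s₁^2)/q₁) + b*((1+s₂^2)/q₂)
      = (a*(1+s₁^2)*q₂ + b*(1+s₂^2)*q₁) / (q₁*q₂) := by
    field_simp
  have hb' : b = 1 - a := by linarith
  have key : (a*(1+s₁^2)*q₂ + b*(1+s₂^2)*q₁) * (a*q₁ + b*q₂)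
      - (1 + (a*s₁ + b*s₂)^2) * (q₁*q₂)
      = a*b*((q₂ - q₁)^2 + (s₁*q₂ - s₂*q₁)^2) := by
    rw [hb']; ring
  have hnn : 0 ≤ a*b*((q₂ - q₁)^2 + (s₁*q₂ - s₂*q₁)^2) :=
    mul_nonneg (mul_nonneg ha hb) (by positivity)
  rw [hr, div_le_div_iff₀ hq (mul_pos h1 h2)]
  linarith

lemma mem_succ {n : ℕ} (hn : 1 ≤ n) (l : Fin (n+1) → ℝ) :
    ((((n:ℕ)+1 : ℕ) : ℝ) - 2) * (π/2) < Th (n+1) l ↔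
      ((n : ℝ) - 2) * (π/2) < Th n (Fin.init l) ∧
        0 < l (Fin.last n) + hh n (Fin.init l) := by
  have hpi : 0 < π := pi_pos
  set A := Th n (Fin.init l) with hA
  set s := l (Fin.last n) with hs
  have hT : Th (n+1) l = A + Real.arctan s := Th_succ n l
  have hAlt : A < (n : ℝ) * (π/2) := Th_lt hn _
  have hu1 : -(π/2) < Real.arctan s := Real.neg_pi_div_two_lt_arctan s
  have hu2 : Real.arctan s < π/2 := Real.arctan_lt_pi_div_two s
  have hcast : ((((n:ℕ)+1 : ℕ) : ℝ) - 2) = (n : ℝ) - 1 := by push_cast; ring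
  rw [hT, hcast]
  constructor
  · intro h
    have hA1 : ((n : ℝ) - 2) * (π/2) < A := by nlinarith
    have hw1 : -(π/2) < A - ((n : ℝ) - 1) * (π/2) := by nlinarith
    have hw2 : A - ((n : ℝ) - 1) * (π/2) < π/2 := by nlinarith
    refine ⟨hA1, ?_⟩
    have hlt : Real.tan (-(A - ((n : ℝ) - 1) * (π/2))) < Real.tan (Real.arctan s) := by
      apply Real.tan_lt_tan_of_lt_of_lt_pi_div_two (by linarith) hu2
      nlinarith
    rw [Real.tan_neg, Real.tan_arctan] at hlt
    have : hh n (Fin.init l) = Real.tan (A - ((n : ℝ) - 1) * (π/2)) := rfl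
    rw [this]
    linarith
  · rintro ⟨hA1, hpos⟩
    have hw1 : -(π/2) < A - ((n : ℝ) - 1) * (π/2) := by nlinarith
    have hw2 : A - ((n : ℝ) - 1) * (π/2) < π/2 := by nlinarith
    have hhn : hh n (Fin.init l) = Real.tan (A - ((n : ℝ) - 1) * (π/2)) := rfl
    rw [hhn] at hpos
    have hlt : Real.tan (-(A - ((n : ℝ) - 1) * (π/2))) < s := by
      rw [Real.tan_neg]; linarith
    have := Real.arctan_strictMono hlt
    rw [Real.arctan_tan (by linarith) (by linarith)] at this
    nlinarith

lemma tan_formula {w u s H : ℝ} (hcw : 0 < Real.cos w) (hcu : 0 < Real.cos u)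
    (hsw : Real.sin w = H * Real.cos w) (hsu : Real.sin u = s * Real.cos u)
    (h2 : 0 < s + H) :
    Real.tan (w + u - π/2) = s - (1 + s^2) / (s + H) := by
  rw [Real.tan_eq_sin_div_cos, Real.sin_sub_pi_div_two, Real.cos_sub_pi_div_two,
    Real.sin_add, Real.cos_add, hsw, hsu]
  have hd : 0 < H * Real.cos w * Real.cos u + Real.cos w * (s * Real.cos u) := by
    have h3 := mul_pos h2 (mul_pos hcw hcu)
    nlinarith
  have step : -(Real.cos w * Real.cos u - H * Real.cos w * (s * Real.cos u))
      / (H * Real.cos w * Real.cos u + Real.cos w * (s * Real.cos u))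
      = (s*H - 1) / (s + H) := by
    rw [div_eq_div_iff (ne_of_gt hd) (ne_of_gt h2)]
    ring
  rw [step]
  field_simp
  ring

lemma hh_succ {n : ℕ} (hn : 1 ≤ n) (l : Fin (n+1) → ℝ)
    (h1 : ((n : ℝ) - 2) * (π/2) < Th n (Fin.init l))
    (h2 : 0 < l (Fin.last n) + hh n (Fin.init l)) :
    hh (n+1) l = l (Fin.last n)
      - (1 + (l (Fin.last n))^2) / (l (Fin.last n) + hh n (Fin.init l)) := by
  have hpi : 0 < π := pi_pos
  set A := Th n (Fin.init l) with hA
  set s := l (Fin.last n) with hs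
  set w := A - ((n : ℝ) - 1) * (π/2) with hw
  set u := Real.arctan s with hu
  have hAlt : A < (n : ℝ) * (π/2) := Th_lt hn _
  have hw1 : -(π/2) < w := by rw [hw]; nlinarith
  have hw2 : w < π/2 := by rw [hw]; nlinarith
  have hH : hh n (Fin.init l) = Real.tan w := rfl
  rw [hH] at h2 ⊢
  have hcw : 0 < Real.cos w := Real.cos_pos_of_mem_Ioo ⟨hw1, hw2⟩
  have hcu : 0 < Real.cos u := Real.cos_arctan_pos s
  have hsw : Real.sin w = Real.tan w * Real.cos w := by
    rw [Real.tan_eq_sin_div_cos]; field_simp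
  have hsu : Real.sin u = s * Real.cos u := by
    have ht : Real.tan u = s := Real.tan_arctan s
    rw [Real.tan_eq_sin_div_cos, div_eq_iff (ne_of_gt hcu)] at ht
    exact ht
  have hangle : Th (n+1) l - (((n+1 : ℕ) : ℝ) - 1) * (π/2) = w + u - π/2 := by
    rw [Th_succ n l, ← hA, ← hs, ← hu, hw]; push_cast; ring
  have hthis : hh (n+1) l = Real.tan (w + u - π/2) := by rw [hh, hangle]
  rw [hthis, tan_formula hcw hcu hsw hsu h2]

lemma key (n : ℕ) (hn : 1 ≤ n) :
    Convex ℝ {l : Fin n → ℝ | ((n : ℝ) - 2) * (π/2) < Th n l} ∧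
    ConcaveOn ℝ {l : Fin n → ℝ | ((n : ℝ) - 2) * (π/2) < Th n l} (hh n) := by
  induction n with
  | zero => exact absurd hn (by norm_num)
  | succ m ih =>
    rcases Nat.eq_zero_or_pos m with hm0 | hm
    · subst hm0
      have mem1 : ∀ z : Fin (0+1) → ℝ,
          z ∈ {l : Fin (0+1) → ℝ | (((0+1 : ℕ) : ℝ) - 2) * (π/2) < Th (0+1) l} := by
        intro z
        have h := Real.neg_pi_div_two_lt_arctan (z 0)
        have hT : Th (0+1) z = Real.arctan (z 0) := by simp [Th]
        simp only [Set.mem_setOf_eq, hT]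
        push_cast
        nlinarith [pi_pos]
      have hh1 : ∀ z : Fin (0+1) → ℝ, hh (0+1) z = z 0 := by
        intro z
        have hT : Th (0+1) z = Real.arctan (z 0) := by simp [Th]
        rw [hh, hT]
        push_cast
        norm_num [Real.tan_arctan]
      refine ⟨fun x _ y _ a b _ _ _ => mem1 _,
        fun x _ y _ a b _ _ _ => mem1 _, fun x _ y _ a b ha hb hab => ?_⟩
      rw [hh1, hh1, hh1]
      simp [Pi.smul_apply, smul_eq_mul]
    · obtain ⟨Cconv, Hconc⟩ := ih hm
      have main : ∀ x y : Fin (m+1) → ℝ,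
          (((m+1 : ℕ) : ℝ) - 2) * (π/2) < Th (m+1) x →
          (((m+1 : ℕ) : ℝ) - 2) * (π/2) < Th (m+1) y →
          ∀ a b : ℝ, 0 ≤ a → 0 ≤ b → a + b = 1 →
          ((((m+1 : ℕ) : ℝ) - 2) * (π/2) < Th (m+1) (a • x + b • y) ∧
            a * hh (m+1) x + b * hh (m+1) y ≤ hh (m+1) (a • x + b • y)) := by
        intro x y hx hy a b ha hb hab
        obtain ⟨hx', hxs⟩ := (mem_succ hm x).mp hx
        obtain ⟨hy', hys⟩ := (mem_succ hm y).mp hy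
        have hinit : Fin.init (a • x + b • y) = a • Fin.init x + b • Fin.init y := by
          funext i; simp [Fin.init]
        have hlast : (a • x + b • y) (Fin.last m)
            = a * x (Fin.last m) + b * y (Fin.last m) := by simp
        have hz' : ((m : ℝ) - 2) * (π/2) < Th m (a • Fin.init x + b • Fin.init y) :=
          Cconv hx' hy' ha hb hab
        have hzc : a * hh m (Fin.init x) + b * hh m (Fin.init y)
            ≤ hh m (a • Fin.init x + b • Fin.init y) := by
          have h := Hconc.2 hx' hy' ha hb hab
          simpa [smul_eq_mul] using h
        have hcombo : 0 < a * (x (Fin.last m) + hh m (Fin.init x))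
            + b * (y (Fin.last m) + hh m (Fin.init y)) := combo_pos ha hb hab hxs hys
        have hpos : 0 < (a • x + b • y) (Fin.last m) + hh m (Fin.init (a • x + b • y)) := by
          rw [hlast, hinit]; nlinarith [hzc]
        refine ⟨(mem_succ hm _).mpr ⟨by rw [hinit]; exact hz', hpos⟩, ?_⟩
        rw [hh_succ hm x hx' hxs, hh_succ hm y hy' hys,
          hh_succ hm _ (by rw [hinit]; exact hz') hpos, hlast, hinit]
        set sx := x (Fin.last m)
        set sy := y (Fin.last m)
        set Hx := hh m (Fin.init x)
        set Hy := hh m (Fin.init y)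
        set Hz := hh m (a • Fin.init x + b • Fin.init y)
        have step1 := qol (s₁ := sx) (s₂ := sy) ha hb hab hxs hys
        have hd2 : a * (sx + Hx) + b * (sy + Hy) ≤ (a * sx + b * sy) + Hz := by
          nlinarith [hzc]
        have hdz : 0 < (a * sx + b * sy) + Hz := by linarith
        have step2 : (1 + (a * sx + b * sy)^2) / ((a * sx + b * sy) + Hz)
            ≤ (1 + (a * sx + b * sy)^2) / (a * (sx + Hx) + b * (sy + Hy)) := by
          gcongr
        nlinarith [step1, step2]
      exact ⟨fun x hx y hy a b ha hb hab => (main x y hx hy a b ha hb hab).1,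
        fun x hx y hy a b ha hb hab => (main x y hx hy a b ha hb hab).1,
        fun x hx y hy a b ha hb hab => by
          simpa [smul_eq_mul] using (main x y hx hy a b ha hb hab).2⟩

end StmtAux

open Real

/-- Lemma 2.1(iv): for `σ ≥ (n-2)π/2`, the superlevel set
`{λ ∈ ℝⁿ : Θ(λ) > σ}` is convex. -/
theorem stmt_3 (n : ℕ) (hn : 1 ≤ n) (σ : ℝ)
    (hσ : ((n : ℝ) - 2) * (π / 2) ≤ σ) :
    Convex ℝ {l : Fin n → ℝ | σ < ∑ i, Real.arctan (l i)} := by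
  have hpi : 0 < π := pi_pos
  obtain ⟨Cconv, Hconc⟩ := key n hn
  by_cases hbig : (n : ℝ) * (π/2) ≤ σ
  · have hempty : {l : Fin n → ℝ | σ < ∑ i, Real.arctan (l i)} = ∅ := by
      ext l
      simp only [Set.mem_setOf_eq, Set.mem_empty_iff_false, iff_false, not_lt]
      exact le_trans (Th_lt hn l).le hbig
    rw [hempty]; exact convex_empty
  push_neg at hbig
  rcases eq_or_lt_of_le hσ with heq | hlt
  · rw [← heq]
    exact Cconv
  · set c := Real.tan (σ - ((n : ℝ) - 1) * (π/2)) with hc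
    have hb1 : -(π/2) < σ - ((n : ℝ) - 1) * (π/2) := by nlinarith
    have hb2 : σ - ((n : ℝ) - 1) * (π/2) < π/2 := by nlinarith
    have hset : {l : Fin n → ℝ | σ < ∑ i, Real.arctan (l i)}
        = {l ∈ {l : Fin n → ℝ | ((n : ℝ) - 2) * (π/2) < Th n l} | c < hh n l} := by
      ext l
      simp only [Set.mem_setOf_eq, Set.mem_sep_iff]
      constructor
      · intro h
        have hTh : σ < Th n l := h
        have hmem : ((n : ℝ) - 2) * (π/2) < Th n l := lt_trans hlt hTh
        refine ⟨hmem, ?_⟩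
        have hw2 : Th n l - ((n : ℝ) - 1) * (π/2) < π/2 := by
          have := Th_lt hn l; nlinarith
        exact Real.tan_lt_tan_of_lt_of_lt_pi_div_two hb1 hw2 (by linarith)
      · rintro ⟨hmem, hcl⟩
        have hw1 : -(π/2) < Th n l - ((n : ℝ) - 1) * (π/2) := by nlinarith
        have hw2 : Th n l - ((n : ℝ) - 1) * (π/2) < π/2 := by
          have := Th_lt hn l; nlinarith
        have h2 : Real.arctan c < Real.arctan (hh n l) := Real.arctan_strictMono hcl
        rw [hc, Real.arctan_tan hb1 hb2] at h2
        have harc : Real.arctan (hh n l) = Th n l - ((n : ℝ) - 1) * (π/2) := by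
          rw [show hh n l = Real.tan (Th n l - ((n : ℝ) - 1) * (π/2)) from rfl,
            Real.arctan_tan hw1 hw2]
        rw [harc] at h2
        have : σ < Th n l := by linarith
        exact this
    rw [hset]
    exact Hconc.convex_gt c
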